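/- Let Ω ⊂ ℝⁿ be a convex body and let c ∈ [0,|Ω|]. For p ∈ [1,∞) set σ_p := inf{ J_p(ω) : ω ⊆ Ω nonempty compact convex, |ω| = c } and σ_∞ := inf{ d^H(ω,Ω) : ω ⊆ Ω nonempty compact convex, |ω| = c }. Then σ_p → σ_∞ as p → ∞. -/

import Mathlib

open MeasureTheory Metric Filter Topology
open scoped ENNReal NNReal Pointwise

/-- Support function of a set `ω`, as a function of the direction `θ`. -/
noncomputable def suppFn {n : ℕ} (ω : Set (EuclideanSpace ℝ (Fin n)))
    (θ : EuclideanSpace ℝ (Fin n)) : ℝ :=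
  sSup ((fun y => (inner ℝ θ y : ℝ)) '' ω)

/-- The p-distance functional `J_p`. -/
noncomputable def Jp {n : ℕ} (Ω ω : Set (EuclideanSpace ℝ (Fin n))) (p : ℝ) : ℝ :=
  (∫ θ in sphere (0 : EuclideanSpace ℝ (Fin n)) 1,
      |suppFn Ω θ - suppFn ω θ| ^ p ∂(μH[(n : ℝ) - 1])) ^ (1 / p)

/-- The admissible class: nonempty compact convex subsets of `Ω` of volume `c`. -/
def Kc {n : ℕ} (Ω : Set (EuclideanSpace ℝ (Fin n))) (c : ℝ≥0∞) :
    Set (Set (EuclideanSpace ℝ (Fin n))) :=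
  {ω | ω.Nonempty ∧ IsCompact ω ∧ Convex ℝ ω ∧ ω ⊆ Ω ∧ volume ω = c}

/-!
On the unit sphere `0 ≤ h_Ω - h_ω ≤ d^H(ω, Ω)`, so `J_p(ω) ≤ d^H(ω, Ω) · H^{n-1}(S)^{1/p}`.
Conversely, for convex `ω ⊆ Ω` the unit vector pointing from the nearest point of `ω` to the point
of `Ω` farthest from `ω` is a direction where `h_Ω - h_ω ≥ d^H(ω, Ω)`. Support functions of sets
in a ball of radius `R` are `R`-Lipschitz, so `h_Ω - h_ω ≥ d^H(ω, Ω) - ε` on a cap of radius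
`ε / 2R` around that direction; all such caps have the same measure `m > 0`, whence
`J_p(ω) ≥ (d^H(ω, Ω) - ε) m^{1/p}` uniformly in `ω`. Both bounds tend to `d^H(ω, Ω)` as
`p → ∞` since `C^{1/p} → 1` for every `C > 0`.

That `H^{n-1}(S)` is finite and caps have positive measure comes from writing a cap as a
Lipschitz graph over a ball of the orthogonal hyperplane.
-/

open Module

section RpowIntegral

variable {α : Type*} [MeasurableSpace α] {μ : Measure α} [IsFiniteMeasure μ] {f : α → ℝ} {p : ℝ}

lemma integral_abs_rpow_rpow_le {T : ℝ} (hp : 0 < p) (hT : 0 ≤ T) (hf : ∀ᵐ x ∂μ, |f x| ≤ T) :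
    (∫ x, |f x| ^ p ∂μ) ^ (1 / p) ≤ T * μ.real Set.univ ^ (1 / p) := by
  have hfp : ∀ᵐ x ∂μ, ‖|f x| ^ p‖ ≤ T ^ p := hf.mono fun x hx => by
    rw [Real.norm_of_nonneg (by positivity)]
    exact Real.rpow_le_rpow (abs_nonneg _) hx hp.le
  have hint : ∫ x, |f x| ^ p ∂μ ≤ T ^ p * μ.real Set.univ := by
    simpa [mul_comm] using (norm_integral_le_of_norm_le_const hfp).trans' (le_abs_self _)
  calc (∫ x, |f x| ^ p ∂μ) ^ (1 / p) ≤ (T ^ p * μ.real Set.univ) ^ (1 / p) :=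
        Real.rpow_le_rpow (integral_nonneg fun _ => by positivity) hint (by positivity)
    _ = T * μ.real Set.univ ^ (1 / p) := by
        rw [Real.mul_rpow (by positivity) measureReal_nonneg, ← Real.rpow_mul hT,
          mul_one_div_cancel hp.ne', Real.rpow_one]

lemma mul_rpow_le_integral_abs_rpow {s : Set α} {τ : ℝ} (hp : 0 < p) (hτ : 0 ≤ τ)
    (hs : MeasurableSet s) (hfs : ∀ x ∈ s, τ ≤ |f x|)
    (hf : Integrable (fun x => |f x| ^ p) μ) :
    τ * μ.real s ^ (1 / p) ≤ (∫ x, |f x| ^ p ∂μ) ^ (1 / p) := by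
  have hint : τ ^ p * μ.real s ≤ ∫ x, |f x| ^ p ∂μ :=
    calc τ ^ p * μ.real s ≤ ∫ x in s, |f x| ^ p ∂μ := by
          rw [mul_comm]
          exact setIntegral_ge_of_const_le hs (measure_ne_top μ s)
            (fun x hx => Real.rpow_le_rpow hτ (hfs x hx) hp.le) hf.integrableOn
      _ ≤ ∫ x, |f x| ^ p ∂μ :=
          setIntegral_le_integral hf (ae_of_all _ fun _ => by positivity)
  calc τ * μ.real s ^ (1 / p) = (τ ^ p * μ.real s) ^ (1 / p) := by
        rw [Real.mul_rpow (by positivity) measureReal_nonneg, ← Real.rpow_mul hτ,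
          mul_one_div_cancel hp.ne', Real.rpow_one]
    _ ≤ (∫ x, |f x| ^ p ∂μ) ^ (1 / p) :=
        Real.rpow_le_rpow (by positivity) hint (by positivity)

end RpowIntegral

lemma tendsto_rpow_one_div_atTop {B : ℝ} (hB : 0 < B) :
    Tendsto (fun p : ℝ => B ^ (1 / p)) atTop (𝓝 1) := by
  simpa [Function.comp_def] using
    (Real.continuousAt_const_rpow hB.ne').tendsto.comp tendsto_inv_atTop_zero

lemma abs_sqrt_sub_sqrt_le {a b α : ℝ} (hα : 0 < α) (ha : α ^ 2 ≤ a) (hb : α ^ 2 ≤ b) :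
    |√a - √b| ≤ |a - b| / (2 * α) := by
  have hsa : α ≤ √a := Real.le_sqrt_of_sq_le ha
  have hsb : α ≤ √b := Real.le_sqrt_of_sq_le hb
  have hab : a - b = (√a - √b) * (√a + √b) := by
    rw [mul_comm, ← sq_sub_sq, Real.sq_sqrt (by nlinarith), Real.sq_sqrt (by nlinarith)]
  rw [hab, abs_mul, abs_of_pos (by linarith : 0 < √a + √b), le_div_iff₀ (by positivity)]
  exact mul_le_mul_of_nonneg_left (by linarith) (abs_nonneg _)

section UnitSphere

variable {E : Type*} [NormedAddCommGroup E] [InnerProductSpace ℝ E] {e : E}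

noncomputable def hemisphereChart (e : E) (v : (ℝ ∙ e)ᗮ) : E := v + √(1 - ‖v‖ ^ 2) • e

lemma norm_hemisphereChart (he : ‖e‖ = 1) {v : (ℝ ∙ e)ᗮ} (hv : ‖v‖ ≤ 1) :
    ‖hemisphereChart e v‖ = 1 := by
  have h := norm_add_sq_eq_norm_sq_add_norm_sq_real (x := (v : E)) (y := √(1 - ‖v‖ ^ 2) • e)
    (by rw [real_inner_smul_right, Submodule.mem_orthogonal_singleton_iff_inner_left.mp v.2,
      mul_zero])
  rw [norm_smul, Real.norm_of_nonneg (Real.sqrt_nonneg _), he, mul_one,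
    Real.mul_self_sqrt (by nlinarith [norm_nonneg v]), ← hemisphereChart,
    show ‖(v : E)‖ = ‖v‖ from rfl] at h
  nlinarith [norm_nonneg (hemisphereChart e v)]

lemma dist_hemisphereChart_le (he : ‖e‖ = 1) {v : (ℝ ∙ e)ᗮ} (hv : ‖v‖ ≤ 1) :
    dist (hemisphereChart e v) e ≤ 2 * ‖v‖ := by
  set t := √(1 - ‖v‖ ^ 2)
  have hv2 : ‖v‖ ^ 2 ≤ ‖v‖ := by nlinarith [norm_nonneg v]
  have ht : 1 - ‖v‖ ^ 2 ≤ t := Real.le_sqrt_of_sq_le (by nlinarith [norm_nonneg v])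
  have ht1 : t ≤ 1 := (Real.sqrt_le_left zero_le_one).2 (by nlinarith [norm_nonneg v])
  calc dist (hemisphereChart e v) e = ‖(v : E) + (t - 1) • e‖ := by
        rw [dist_eq_norm, hemisphereChart, sub_smul, one_smul, add_sub_assoc]
    _ ≤ ‖v‖ + |t - 1| := by
        simpa [norm_smul, he] using norm_add_le (v : E) ((t - 1) • e)
    _ ≤ 2 * ‖v‖ := by rw [abs_of_nonpos (by linarith)]; linarith

lemma orthogonalProjectionOnto_hemisphereChart (v : (ℝ ∙ e)ᗮ) :
    (ℝ ∙ e)ᗮ.orthogonalProjectionOnto (hemisphereChart e v) = v := by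
  have he : (ℝ ∙ e)ᗮ.orthogonalProjectionOnto e = 0 :=
    Submodule.orthogonalProjectionOnto_apply_of_mem_orthogonal
      (Submodule.le_orthogonal_orthogonal _ (Submodule.mem_span_singleton_self e))
  rw [hemisphereChart, map_add, map_smul, he, smul_zero, add_zero,
    Submodule.orthogonalProjectionOnto_mem_subspace_eq_self]

lemma lipschitzOnWith_hemisphereChart (he : ‖e‖ = 1) {α : ℝ} (hα : 0 < α) :
    LipschitzOnWith (1 + α⁻¹).toNNReal (hemisphereChart e) {v | α ^ 2 ≤ 1 - ‖v‖ ^ 2} := by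
  refine LipschitzOnWith.of_dist_le_mul fun v hv w hw => ?_
  simp only [Set.mem_ofPred_eq] at hv hw
  have hnorm : |(1 - ‖v‖ ^ 2) - (1 - ‖w‖ ^ 2)| ≤ 2 * ‖v - w‖ := by
    have hv1 : ‖v‖ ≤ 1 := by nlinarith [norm_nonneg v, sq_nonneg α]
    have hw1 : ‖w‖ ≤ 1 := by nlinarith [norm_nonneg w, sq_nonneg α]
    rw [show (1 - ‖v‖ ^ 2) - (1 - ‖w‖ ^ 2) = -((‖v‖ - ‖w‖) * (‖v‖ + ‖w‖)) by ring, abs_neg,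
      abs_mul, abs_of_nonneg (by positivity : 0 ≤ ‖v‖ + ‖w‖), mul_comm 2]
    exact mul_le_mul (abs_norm_sub_norm_le v w) (by linarith) (by positivity) (norm_nonneg _)
  have hsqrt := (abs_sqrt_sub_sqrt_le hα hv hw).trans
    (div_le_div_of_nonneg_right hnorm (by positivity))
  rw [Real.coe_toNNReal _ (by positivity), dist_eq_norm, dist_eq_norm]
  calc ‖hemisphereChart e v - hemisphereChart e w‖
      = ‖((v - w : (ℝ ∙ e)ᗮ) : E) + (√(1 - ‖v‖ ^ 2) - √(1 - ‖w‖ ^ 2)) • e‖ := by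
        rw [hemisphereChart, hemisphereChart, sub_smul, Submodule.coe_sub]; abel_nf
    _ ≤ ‖v - w‖ + |√(1 - ‖v‖ ^ 2) - √(1 - ‖w‖ ^ 2)| := by
        simpa [norm_smul, he] using norm_add_le ((v - w : (ℝ ∙ e)ᗮ) : E)
          ((√(1 - ‖v‖ ^ 2) - √(1 - ‖w‖ ^ 2)) • e)
    _ ≤ (1 + α⁻¹) * ‖v - w‖ := by
        rw [show 2 * ‖v - w‖ / (2 * α) = α⁻¹ * ‖v - w‖ by field_simp] at hsqrt
        linarith

lemma sphere_inter_le_inner_subset_image_hemisphereChart (he : ‖e‖ = 1) {α : ℝ} (hα : 0 < α) :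
    sphere (0 : E) 1 ∩ {θ | α ≤ inner ℝ e θ} ⊆
      hemisphereChart e '' {v | α ^ 2 ≤ 1 - ‖v‖ ^ 2} := by
  rintro θ ⟨hθ, hαθ : α ≤ inner ℝ e θ⟩
  rw [mem_sphere_zero_iff_norm] at hθ
  set s := inner ℝ e θ
  have hv : θ - s • e ∈ (ℝ ∙ e)ᗮ := by
    rw [Submodule.mem_orthogonal_singleton_iff_inner_right, inner_sub_right,
      real_inner_smul_right, real_inner_self_eq_norm_sq, he]
    ring
  have hnorm : ‖θ - s • e‖ ^ 2 = 1 - s ^ 2 := by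
    rw [norm_sub_sq_real, real_inner_smul_right, norm_smul, Real.norm_eq_abs, he, hθ,
      real_inner_comm]
    rw [mul_one, sq_abs]; ring
  refine ⟨⟨θ - s • e, hv⟩, ?_, ?_⟩
  · show α ^ 2 ≤ 1 - ‖θ - s • e‖ ^ 2
    rw [hnorm]; nlinarith
  · show θ - s • e + √(1 - ‖θ - s • e‖ ^ 2) • e = θ
    rw [hnorm, sub_sub_cancel, Real.sqrt_sq (by linarith)]
    abel

lemma one_le_finrank_of_mem_sphere [FiniteDimensional ℝ E] (he : e ∈ sphere (0 : E) 1) :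
    (1 : ℝ) ≤ finrank ℝ E := by
  have : Nontrivial E := nontrivial_of_ne e 0 (ne_zero_of_mem_unit_sphere ⟨e, he⟩)
  exact Nat.one_le_cast.mpr finrank_pos

variable [MeasurableSpace E] [BorelSpace E]

lemma hausdorffMeasure_sphere_inter_ball_congr (d : ℝ) {θ₀ θ₁ : E}
    (hθ₀ : θ₀ ∈ sphere (0 : E) 1) (hθ₁ : θ₁ ∈ sphere (0 : E) 1) (r : ℝ) :
    μH[d] (sphere (0 : E) 1 ∩ ball θ₀ r) = μH[d] (sphere (0 : E) 1 ∩ ball θ₁ r) := by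
  set R := (ℝ ∙ (θ₀ - θ₁))ᗮ.reflection
  have hR : R θ₀ = θ₁ := Submodule.reflection_sub
    (by rw [mem_sphere_zero_iff_norm.mp hθ₀, mem_sphere_zero_iff_norm.mp hθ₁])
  rw [← R.toIsometryEquiv.hausdorffMeasure_preimage, Set.preimage_inter]
  simp [R, LinearIsometryEquiv.preimage_sphere, LinearIsometryEquiv.preimage_ball, hR]

variable [FiniteDimensional ℝ E]

lemma hausdorffMeasure_orthogonal_span_singleton_eq (he : e ≠ 0) :
    (μH[(finrank ℝ E : ℝ) - 1] : Measure (ℝ ∙ e)ᗮ) = μH[finrank ℝ (ℝ ∙ e)ᗮ] := by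
  have h := (ℝ ∙ e).finrank_add_finrank_orthogonal
  rw [finrank_span_singleton he] at h
  rw [← h]; push_cast; ring_nf

lemma hausdorffMeasure_sphere_inter_le_inner_lt_top (he : ‖e‖ = 1) {α : ℝ}
    (hα : 0 < α) : μH[(finrank ℝ E : ℝ) - 1] (sphere (0 : E) 1 ∩ {θ | α ≤ inner ℝ e θ}) < ⊤ := by
  have he0 : e ≠ 0 := ne_zero_of_norm_ne_zero (by rw [he]; exact one_ne_zero)
  have hd : 0 ≤ (finrank ℝ E : ℝ) - 1 := by
    linarith [one_le_finrank_of_mem_sphere (mem_sphere_zero_iff_norm.mpr he)]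
  have hA : {v : (ℝ ∙ e)ᗮ | α ^ 2 ≤ 1 - ‖v‖ ^ 2} ⊆ closedBall 0 1 := fun v hv => by
    rw [mem_closedBall_zero_iff]; nlinarith [norm_nonneg v, sq_nonneg α, hv.out]
  calc μH[(finrank ℝ E : ℝ) - 1] (sphere (0 : E) 1 ∩ {θ | α ≤ inner ℝ e θ})
      ≤ μH[(finrank ℝ E : ℝ) - 1] (hemisphereChart e '' {v | α ^ 2 ≤ 1 - ‖v‖ ^ 2}) :=
        measure_mono (sphere_inter_le_inner_subset_image_hemisphereChart he hα)
    _ ≤ ((1 + α⁻¹).toNNReal : ℝ≥0∞) ^ ((finrank ℝ E : ℝ) - 1) *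
          μH[(finrank ℝ E : ℝ) - 1] {v : (ℝ ∙ e)ᗮ | α ^ 2 ≤ 1 - ‖v‖ ^ 2} :=
        (lipschitzOnWith_hemisphereChart he hα).hausdorffMeasure_image_le hd
    _ < ⊤ := by
        refine ENNReal.mul_lt_top (ENNReal.rpow_lt_top_of_nonneg hd ENNReal.coe_ne_top) ?_
        rw [hausdorffMeasure_orthogonal_span_singleton_eq he0]
        exact (measure_mono hA).trans_lt (isCompact_closedBall _ _).measure_lt_top

lemma hausdorffMeasure_sphere_lt_top : μH[(finrank ℝ E : ℝ) - 1] (sphere (0 : E) 1) < ⊤ := by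
  refine (isCompact_sphere 0 1).measure_lt_top_of_nhdsWithin fun θ hθ => ?_
  have hθ1 : ‖θ‖ = 1 := mem_sphere_zero_iff_norm.mp hθ
  have hcap : {θ' | 1 / 2 < inner ℝ θ θ'} ∈ 𝓝 θ :=
    (isOpen_lt continuous_const (continuous_const.inner continuous_id)).mem_nhds
      (by norm_num [hθ1])
  refine ⟨_, inter_mem_nhdsWithin _ hcap, ?_⟩
  exact (measure_mono (Set.inter_subset_inter_right _
    (Set.ofPred_subset_ofPred.mpr fun _ => le_of_lt))).trans_lt
    (hausdorffMeasure_sphere_inter_le_inner_lt_top hθ1 one_half_pos)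

lemma hausdorffMeasure_sphere_inter_ball_pos {θ₀ : E} (hθ₀ : θ₀ ∈ sphere (0 : E) 1) {r : ℝ}
    (hr : 0 < r) : 0 < μH[(finrank ℝ E : ℝ) - 1] (sphere (0 : E) 1 ∩ ball θ₀ r) := by
  have hθ₀1 : ‖θ₀‖ = 1 := mem_sphere_zero_iff_norm.mp hθ₀
  have hd : 0 ≤ (finrank ℝ E : ℝ) - 1 := by linarith [one_le_finrank_of_mem_sphere hθ₀]
  set K := (ℝ ∙ θ₀)ᗮ
  have hball : ball (0 : K) (min (r / 2) 1) ⊆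
      K.orthogonalProjectionOnto '' (sphere (0 : E) 1 ∩ ball θ₀ r) := by
    intro v hv
    rw [mem_ball_zero_iff, lt_min_iff] at hv
    refine ⟨hemisphereChart θ₀ v, ⟨?_, ?_⟩, orthogonalProjectionOnto_hemisphereChart v⟩
    · exact mem_sphere_zero_iff_norm.mpr (norm_hemisphereChart hθ₀1 hv.2.le)
    · exact mem_ball.mpr ((dist_hemisphereChart_le hθ₀1 hv.2.le).trans_lt (by linarith))
  calc (0 : ℝ≥0∞) < μH[(finrank ℝ E : ℝ) - 1] (ball (0 : K) (min (r / 2) 1)) := by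
        rw [hausdorffMeasure_orthogonal_span_singleton_eq (ne_zero_of_mem_unit_sphere ⟨θ₀, hθ₀⟩)]
        exact measure_ball_pos _ _ (lt_min (half_pos hr) one_pos)
    _ ≤ μH[(finrank ℝ E : ℝ) - 1] (sphere (0 : E) 1 ∩ ball θ₀ r) :=
        (measure_mono hball).trans (hausdorffMeasure_orthogonalProjectionOnto_le K _ _ hd)

end UnitSphere

lemma inner_sub_le_zero_of_infDist_eq_dist {F : Type*} [NormedAddCommGroup F]
    [InnerProductSpace ℝ F] {ω : Set F} (hω : Convex ℝ ω) {x y : F} (hy : y ∈ ω)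
    (hxy : infDist x ω = dist x y) {w : F} (hw : w ∈ ω) : inner ℝ (x - y) (w - y) ≤ 0 := by
  refine (norm_eq_iInf_iff_real_inner_le_zero hω hy).mp ?_ w hw
  simpa only [← dist_eq_norm, infDist_eq_iInf] using hxy.symm

section SupportFunction

variable {n : ℕ}

local notation "E" => EuclideanSpace ℝ (Fin n)

lemma le_suppFn {ω : Set E} (hω : IsCompact ω) (θ : E) {y : E} (hy : y ∈ ω) :
    inner ℝ θ y ≤ suppFn ω θ :=
  le_csSup (hω.image (continuous_const.inner continuous_id)).bddAbove (Set.mem_image_of_mem _ hy)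

lemma suppFn_le {ω : Set E} (hω : ω.Nonempty) {θ : E} {a : ℝ}
    (h : ∀ y ∈ ω, inner ℝ θ y ≤ a) : suppFn ω θ ≤ a :=
  csSup_le (hω.image _) (Set.forall_mem_image.2 h)

lemma suppFn_mono {ω Ω : Set E} (hω : ω.Nonempty) (hΩ : IsCompact Ω) (h : ω ⊆ Ω) (θ : E) :
    suppFn ω θ ≤ suppFn Ω θ :=
  suppFn_le hω fun _ hy => le_suppFn hΩ θ (h hy)

lemma suppFn_le_suppFn_add {ω : Set E} (hω : ω.Nonempty) (hωc : IsCompact ω) {R : ℝ}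
    (hR : ω ⊆ closedBall 0 R) (θ θ' : E) : suppFn ω θ ≤ suppFn ω θ' + R * ‖θ - θ'‖ := by
  refine suppFn_le hω fun y hy => ?_
  have hy' : ‖y‖ ≤ R := mem_closedBall_zero_iff.mp (hR hy)
  calc inner ℝ θ y = inner ℝ θ' y + inner ℝ (θ - θ') y := by rw [← inner_add_left, add_sub_cancel]
    _ ≤ suppFn ω θ' + ‖θ - θ'‖ * ‖y‖ := add_le_add (le_suppFn hωc θ' hy) (real_inner_le_norm _ _)
    _ ≤ suppFn ω θ' + R * ‖θ - θ'‖ := by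
        rw [mul_comm]; gcongr

lemma suppFn_sub_suppFn_le_add {ω Ω : Set E} (hω : ω.Nonempty) (hωc : IsCompact ω)
    (hΩc : IsCompact Ω) (hsub : ω ⊆ Ω) {R : ℝ} (hΩR : Ω ⊆ closedBall 0 R) (θ θ' : E) :
    suppFn Ω θ - suppFn ω θ ≤ suppFn Ω θ' - suppFn ω θ' + 2 * R * ‖θ - θ'‖ := by
  have hΩ := suppFn_le_suppFn_add (hω.mono hsub) hΩc hΩR θ θ'
  have hω := suppFn_le_suppFn_add hω hωc (hsub.trans hΩR) θ' θ
  rw [norm_sub_rev] at hω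
  linarith

lemma continuous_suppFn {ω : Set E} (hω : ω.Nonempty) (hωc : IsCompact ω) :
    Continuous (suppFn ω) := by
  obtain ⟨R, hR0, hR⟩ := hωc.isBounded.subset_closedBall_lt 0 0
  refine (LipschitzWith.of_le_add_mul R.toNNReal fun θ θ' => ?_).continuous
  rw [Real.coe_toNNReal _ hR0.le, dist_eq_norm]
  exact suppFn_le_suppFn_add hω hωc hR θ θ'

lemma suppFn_sub_suppFn_le_hausdorffDist {ω Ω : Set E} (hω : ω.Nonempty) (hωc : IsCompact ω)
    (hΩ : Ω.Nonempty) (hΩc : IsCompact Ω) {θ : E} (hθ : ‖θ‖ = 1) :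
    suppFn Ω θ - suppFn ω θ ≤ hausdorffDist ω Ω := by
  rw [sub_le_iff_le_add, hausdorffDist_comm]
  refine suppFn_le hΩ fun x hx => ?_
  obtain ⟨y, hy, hxy⟩ := hωc.exists_infDist_eq_dist hω x
  have hdist : dist x y ≤ hausdorffDist Ω ω := hxy ▸ infDist_le_hausdorffDist_of_mem hx
    (hausdorffEDist_ne_top_of_nonempty_of_bounded hΩ hω hΩc.isBounded hωc.isBounded)
  calc inner ℝ θ x = inner ℝ θ y + inner ℝ θ (x - y) := by rw [← inner_add_right, add_sub_cancel]
    _ ≤ suppFn ω θ + ‖θ‖ * ‖x - y‖ := add_le_add (le_suppFn hωc θ hy) (real_inner_le_norm _ _)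
    _ ≤ hausdorffDist Ω ω + suppFn ω θ := by rw [hθ, one_mul, ← dist_eq_norm]; linarith

lemma abs_suppFn_sub_suppFn_le_hausdorffDist {ω Ω : Set E} (hω : ω.Nonempty)
    (hωc : IsCompact ω) (hΩc : IsCompact Ω) (hsub : ω ⊆ Ω) {θ : E} (hθ : θ ∈ sphere (0 : E) 1) :
    |suppFn Ω θ - suppFn ω θ| ≤ hausdorffDist ω Ω := by
  rw [abs_of_nonneg (sub_nonneg.2 (suppFn_mono hω hΩc hsub θ))]
  exact suppFn_sub_suppFn_le_hausdorffDist hω hωc (hω.mono hsub) hΩc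
    (mem_sphere_zero_iff_norm.mp hθ)

/-- Witness: the direction from the nearest point of `ω` to the point of `Ω` farthest
from `ω`. -/
lemma exists_mem_sphere_hausdorffDist_le {ω Ω : Set E} (hω : ω.Nonempty) (hωc : IsCompact ω)
    (hωconv : Convex ℝ ω) (hΩc : IsCompact Ω) (hsub : ω ⊆ Ω) (hpos : 0 < hausdorffDist ω Ω) :
    ∃ θ ∈ sphere (0 : E) 1, hausdorffDist ω Ω ≤ suppFn Ω θ - suppFn ω θ := by
  obtain ⟨x, hxΩ, hxmax⟩ := hΩc.exists_isMaxOn (hω.mono hsub)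
    (continuous_infDist_pt ω).continuousOn
  obtain ⟨y, hyω, hxy⟩ := hωc.exists_infDist_eq_dist hω x
  set t := dist x y
  have hdt : hausdorffDist ω Ω ≤ t := by
    refine hxy ▸ hausdorffDist_le_of_infDist infDist_nonneg (fun z hz => ?_) fun z hz => hxmax hz
    rw [infDist_zero_of_mem (hsub hz)]; exact infDist_nonneg
  have ht : 0 < t := hpos.trans_le hdt
  have hnorm : ‖x - y‖ = t := (dist_eq_norm x y).symm
  refine ⟨t⁻¹ • (x - y), ?_, ?_⟩
  · rw [mem_sphere_zero_iff_norm, norm_smul, norm_inv, Real.norm_of_nonneg ht.le, hnorm,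
      inv_mul_cancel₀ ht.ne']
  have hω_le : suppFn ω (t⁻¹ • (x - y)) ≤ inner ℝ (t⁻¹ • (x - y)) y := by
    refine suppFn_le hω fun w hw => ?_
    have h := inner_sub_le_zero_of_infDist_eq_dist hωconv hyω hxy hw
    rw [inner_sub_right] at h
    rw [real_inner_smul_left, real_inner_smul_left]
    exact mul_le_mul_of_nonneg_left (by linarith) (inv_nonneg.2 ht.le)
  have hΩ_ge := le_suppFn hΩc (t⁻¹ • (x - y)) hxΩ
  have hgap : inner ℝ (t⁻¹ • (x - y)) x - inner ℝ (t⁻¹ • (x - y)) y = t := by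
    rw [← inner_sub_right, real_inner_smul_left, real_inner_self_eq_norm_sq, hnorm]
    field_simp
  linarith

lemma hausdorffMeasure_finrank_euclideanSpace_sub_one :
    (μH[(finrank ℝ E : ℝ) - 1] : Measure E) = μH[(n : ℝ) - 1] := by
  rw [finrank_euclideanSpace_fin]

instance isFiniteMeasure_hausdorffMeasure_restrict_sphere :
    IsFiniteMeasure ((μH[(n : ℝ) - 1] : Measure E).restrict (sphere 0 1)) :=
  isFiniteMeasure_restrict.2
    (hausdorffMeasure_finrank_euclideanSpace_sub_one ▸ hausdorffMeasure_sphere_lt_top).ne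

lemma Jp_nonneg (Ω ω : Set E) (p : ℝ) : 0 ≤ Jp Ω ω p :=
  Real.rpow_nonneg (integral_nonneg fun _ => by positivity) _

lemma Jp_le_hausdorffDist_mul {ω Ω : Set E} (hω : ω.Nonempty) (hωc : IsCompact ω)
    (hΩc : IsCompact Ω) (hsub : ω ⊆ Ω) {p : ℝ} (hp : 0 < p) :
    Jp Ω ω p ≤
      hausdorffDist ω Ω * (μH[(n : ℝ) - 1] : Measure E).real (sphere 0 1) ^ (1 / p) := by
  simpa [Jp] using integral_abs_rpow_rpow_le hp hausdorffDist_nonneg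
    ((ae_restrict_iff' isClosed_sphere.measurableSet).2 (ae_of_all _ fun θ hθ =>
      abs_suppFn_sub_suppFn_le_hausdorffDist hω hωc hΩc hsub hθ))

lemma mul_rpow_le_Jp {ω Ω : Set E} (hω : ω.Nonempty) (hωc : IsCompact ω) (hΩc : IsCompact Ω)
    (hsub : ω ⊆ Ω) {s : Set E} (hs : MeasurableSet s) (hsS : s ⊆ sphere 0 1) {τ p : ℝ}
    (hp : 0 < p) (hτ : 0 ≤ τ) (hτs : ∀ θ ∈ s, τ ≤ |suppFn Ω θ - suppFn ω θ|) :
    τ * (μH[(n : ℝ) - 1] : Measure E).real s ^ (1 / p) ≤ Jp Ω ω p := by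
  have hcont : Continuous fun θ => |suppFn Ω θ - suppFn ω θ| ^ p :=
    ((continuous_suppFn (hω.mono hsub) hΩc).sub (continuous_suppFn hω hωc)).abs.rpow_const
      fun _ => Or.inr hp.le
  have hint : Integrable (fun θ => |suppFn Ω θ - suppFn ω θ| ^ p)
      ((μH[(n : ℝ) - 1] : Measure E).restrict (sphere 0 1)) :=
    .of_bound hcont.aestronglyMeasurable (hausdorffDist ω Ω ^ p)
      ((ae_restrict_iff' isClosed_sphere.measurableSet).2 (ae_of_all _ fun θ hθ => by
        rw [Real.norm_of_nonneg (by positivity)]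
        exact Real.rpow_le_rpow (abs_nonneg _)
          (abs_suppFn_sub_suppFn_le_hausdorffDist hω hωc hΩc hsub hθ) hp.le))
  simpa [Jp, measureReal_restrict_apply hs, Set.inter_eq_left.2 hsS] using
    mul_rpow_le_integral_abs_rpow hp hτ hs hτs hint

/-- The cap may be centred anywhere on the sphere: all caps of a given radius have the same
measure. -/
lemma mul_rpow_le_Jp_of_add_le_hausdorffDist {ω Ω : Set E} (hω : ω.Nonempty)
    (hωc : IsCompact ω) (hωconv : Convex ℝ ω) (hΩc : IsCompact Ω) (hsub : ω ⊆ Ω) {R : ℝ}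
    (hR : 0 < R) (hΩR : Ω ⊆ closedBall 0 R) {τ ε p : ℝ} (hτ : 0 ≤ τ) (hε : 0 < ε)
    (hτε : τ + ε ≤ hausdorffDist ω Ω) (hp : 0 < p) {θ₀ : E} (hθ₀ : θ₀ ∈ sphere (0 : E) 1) :
    τ * (μH[(n : ℝ) - 1] : Measure E).real (sphere 0 1 ∩ ball θ₀ (ε / (2 * R))) ^ (1 / p) ≤
      Jp Ω ω p := by
  obtain ⟨θ₁, hθ₁, hθ₁d⟩ :=
    exists_mem_sphere_hausdorffDist_le hω hωc hωconv hΩc hsub (by linarith)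
  rw [measureReal_def, hausdorffMeasure_sphere_inter_ball_congr _ hθ₀ hθ₁, ← measureReal_def]
  refine mul_rpow_le_Jp hω hωc hΩc hsub (isClosed_sphere.measurableSet.inter measurableSet_ball)
    Set.inter_subset_left hp hτ fun θ ⟨_, hθ⟩ => ?_
  have hclose : 2 * R * ‖θ₁ - θ‖ ≤ ε := by
    rw [norm_sub_rev, ← dist_eq_norm]
    have := (mem_ball.mp hθ).le
    rw [le_div_iff₀ (by positivity)] at this
    linarith
  have := suppFn_sub_suppFn_le_add hω hωc hΩc hsub hΩR θ₁ θ
  exact (by linarith : τ ≤ suppFn Ω θ - suppFn ω θ).trans (le_abs_self _)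

lemma eventually_sInf_Jp_lt {Ω : Set E} {𝒦 : Set (Set E)} (hΩc : IsCompact Ω)
    (h𝒦 : ∀ ω ∈ 𝒦, ω.Nonempty ∧ IsCompact ω ∧ ω ⊆ Ω) {ε : ℝ} (hε : 0 < ε) :
    ∀ᶠ p in atTop, sInf ((fun ω => Jp Ω ω p) '' 𝒦) <
      sInf ((fun ω => hausdorffDist ω Ω) '' 𝒦) + ε := by
  rcases 𝒦.eq_empty_or_nonempty with rfl | hne
  · simp only [Set.image_empty, Real.sInf_empty, zero_add]
    exact Eventually.of_forall fun _ => hε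
  obtain ⟨_, ⟨ω, hω𝒦, rfl⟩, hωσ⟩ := Real.lt_sInf_add_pos (hne.image _) hε
  obtain ⟨hω, hωc, hsub⟩ := h𝒦 ω hω𝒦
  -- `max 1` because `H^{n-1}(S) = 0` when `n = 0`, and `0 ^ (1 / p)` does not tend to `1`.
  set B := max 1 ((μH[(n : ℝ) - 1] : Measure E).real (sphere 0 1))
  have hJ : ∀ p : ℝ, 0 < p → Jp Ω ω p ≤ hausdorffDist ω Ω * B ^ (1 / p) := fun p hp =>
    (Jp_le_hausdorffDist_mul hω hωc hΩc hsub hp).trans <| mul_le_mul_of_nonneg_left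
      (Real.rpow_le_rpow measureReal_nonneg (le_max_right _ _) (by positivity))
      hausdorffDist_nonneg
  have hlim : Tendsto (fun p : ℝ => hausdorffDist ω Ω * B ^ (1 / p)) atTop
      (𝓝 (hausdorffDist ω Ω)) := by
    simpa using tendsto_const_nhds.mul
      (tendsto_rpow_one_div_atTop (zero_lt_one.trans_le (le_max_left _ _)))
  filter_upwards [eventually_gt_atTop 0, hlim.eventually_lt_const hωσ] with p hp hpσ
  have hbdd : BddBelow ((fun ω => Jp Ω ω p) '' 𝒦) :=
    ⟨0, Set.forall_mem_image.2 fun ω _ => Jp_nonneg Ω ω p⟩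
  exact (csInf_le hbdd ⟨ω, hω𝒦, rfl⟩).trans_lt ((hJ p hp).trans_lt hpσ)

lemma eventually_lt_sInf_Jp {Ω : Set E} {𝒦 : Set (Set E)} (hΩc : IsCompact Ω)
    (h𝒦 : ∀ ω ∈ 𝒦, ω.Nonempty ∧ IsCompact ω ∧ Convex ℝ ω ∧ ω ⊆ Ω) {ε : ℝ} (hε : 0 < ε) :
    ∀ᶠ p in atTop, sInf ((fun ω => hausdorffDist ω Ω) '' 𝒦) - ε <
      sInf ((fun ω => Jp Ω ω p) '' 𝒦) := by
  set σ := sInf ((fun ω => hausdorffDist ω Ω) '' 𝒦)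
  have hJ : ∀ p, 0 ≤ sInf ((fun ω => Jp Ω ω p) '' 𝒦) := fun p =>
    Real.sInf_nonneg (Set.forall_mem_image.2 fun ω _ => Jp_nonneg Ω ω p)
  rcases lt_or_ge σ ε with hσ | hσ
  · exact Eventually.of_forall fun p => by linarith [hJ p]
  obtain ⟨ω₁, hω₁𝒦⟩ : 𝒦.Nonempty := Set.nonempty_iff_ne_empty.2 fun h => by
    rw [show σ = 0 by simp [σ, h]] at hσ
    linarith
  have hσω : ∀ ω ∈ 𝒦, σ ≤ hausdorffDist ω Ω := fun ω hω =>
    csInf_le ⟨0, Set.forall_mem_image.2 fun _ _ => hausdorffDist_nonneg⟩ ⟨ω, hω, rfl⟩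
  obtain ⟨hω₁, hω₁c, hω₁conv, hsub₁⟩ := h𝒦 ω₁ hω₁𝒦
  obtain ⟨θ₀, hθ₀, -⟩ := exists_mem_sphere_hausdorffDist_le hω₁ hω₁c hω₁conv hΩc hsub₁
    (hε.trans_le (hσ.trans (hσω ω₁ hω₁𝒦)))
  obtain ⟨R, hR, hΩR⟩ := hΩc.isBounded.subset_closedBall_lt 0 0
  have hm : 0 < (μH[(n : ℝ) - 1] : Measure E).real (sphere 0 1 ∩ ball θ₀ (ε / 2 / (2 * R))) := by
    rw [measureReal_def, ← hausdorffMeasure_finrank_euclideanSpace_sub_one]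
    exact ENNReal.toReal_pos (hausdorffMeasure_sphere_inter_ball_pos hθ₀ (by positivity)).ne'
      ((measure_mono Set.inter_subset_left).trans_lt hausdorffMeasure_sphere_lt_top).ne
  set m := (μH[(n : ℝ) - 1] : Measure E).real (sphere 0 1 ∩ ball θ₀ (ε / 2 / (2 * R)))
  have hlim : Tendsto (fun p : ℝ => (σ - ε / 2) * m ^ (1 / p)) atTop (𝓝 (σ - ε / 2)) := by
    simpa using tendsto_const_nhds.mul (tendsto_rpow_one_div_atTop hm)
  filter_upwards [eventually_gt_atTop 0,
    hlim.eventually_const_lt (show σ - ε < σ - ε / 2 by linarith)] with p hp hpσ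
  refine hpσ.trans_le (le_csInf (Set.nonempty_of_mem ⟨ω₁, hω₁𝒦, rfl⟩) ?_)
  refine Set.forall_mem_image.2 fun ω hω => ?_
  obtain ⟨hωne, hωc, hωconv, hsub⟩ := h𝒦 ω hω
  exact mul_rpow_le_Jp_of_add_le_hausdorffDist hωne hωc hωconv hΩc hsub hR hΩR
    (by linarith) (half_pos hε) (by linarith [hσω ω hω]) hp hθ₀

theorem tendsto_sInf_Jp_sInf_hausdorffDist {Ω : Set E} {𝒦 : Set (Set E)} (hΩc : IsCompact Ω)
    (h𝒦 : ∀ ω ∈ 𝒦, ω.Nonempty ∧ IsCompact ω ∧ Convex ℝ ω ∧ ω ⊆ Ω) :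
    Tendsto (fun p => sInf ((fun ω => Jp Ω ω p) '' 𝒦)) atTop
      (𝓝 (sInf ((fun ω => hausdorffDist ω Ω) '' 𝒦))) := by
  refine Metric.tendsto_nhds.2 fun ε hε => ?_
  filter_upwards [eventually_sInf_Jp_lt hΩc (fun ω hω => ⟨(h𝒦 ω hω).1, (h𝒦 ω hω).2.1,
      (h𝒦 ω hω).2.2.2⟩) hε, eventually_lt_sInf_Jp hΩc h𝒦 hε] with p hlt hgt
  rw [Real.dist_eq, abs_sub_lt_iff]
  constructor <;> linarith

end SupportFunction

theorem sigma_p_tendsto_sigma_infty_general {n : ℕ} (Ω : Set (EuclideanSpace ℝ (Fin n)))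
    (hΩcomp : IsCompact Ω) (c : ℝ≥0∞) :
    Tendsto (fun p : ℝ => sInf ((fun ω => Jp Ω ω p) '' Kc Ω c)) atTop
      (𝓝 (sInf ((fun ω => hausdorffDist ω Ω) '' Kc Ω c))) :=
  tendsto_sInf_Jp_sInf_hausdorffDist hΩcomp fun _ hω => ⟨hω.1, hω.2.1, hω.2.2.1, hω.2.2.2.1⟩

/-- The values `σ_p` of the approximated problems converge, as `p → ∞`, to the value
`σ_∞` of the Hausdorff-distance problem. -/
theorem sigma_p_tendsto_sigma_infty {n : ℕ} (Ω : Set (EuclideanSpace ℝ (Fin n)))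
    (hΩcomp : IsCompact Ω) (hΩconv : Convex ℝ Ω) (hΩint : (interior Ω).Nonempty)
    (c : ℝ≥0∞) (hc : c ≤ volume Ω) :
    Tendsto (fun p : ℝ => sInf ((fun ω => Jp Ω ω p) '' Kc Ω c)) atTop
      (𝓝 (sInf ((fun ω => hausdorffDist ω Ω) '' Kc Ω c))) :=
  sigma_p_tendsto_sigma_infty_general Ω hΩcomp c
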